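/- Let q be a prime power and let d ≥ 3 be a divisor of q²−1. Let a, b, c, u, v ∈ F_{q²} satisfy a·b ≠ 0, a^{q+1} = b^{q+1}, a·c^q = b^q·c and u^{q+1} ≠ v^{q+1}. Define f(x) = Σ_{k=0}^{d−1} (a·x^q + b·x + c)^{k·(q²−1)/d + 1} + u·x^q + v·x. Then: (i) f is a permutation polynomial of F_{q²} if (1 + d·(B + B^q)/(u^{q+1} − v^{q+1}))^{(q²−1)/d} = 1; (ii) if moreover d is an odd divisor of q−1, then f is a permutation polynomial of F_{q²} if and only if (1 + d·(B + B^q)/(u^{q+1} − v^{q+1}))^{(q²−1)/d} = 1. -/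

import Mathlib

open Finset Polynomial

/-!
Write `σ x = x ^ q`, `φ x = a σx + b x + c`, `L x = u σx + v x` and `s = (q² - 1)/d`. The
conditions on `a, b, c` make `φ` take values in the `𝔽_q`-line `T = {t | b σt = σa t}`, and the sum
in `f` is `g t = d t` when `t ^ s = 1` and `0` otherwise, so `f = g ∘ φ + L` with `L` bijective since
`u^{q+1} ≠ v^{q+1}`. The key identity: if `L w ∈ T` then
`(u^{q+1} - v^{q+1}) (a σw + b w) = (B + σB) L w`, i.e. `φ (x + w) = φ x + β L w` with
`β = (B + σB)/(u^{q+1} - v^{q+1})`.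

If `f x₁ = f x₂`, then `L (x₁ - x₂) ∈ T`, and comparing the `g`-values shows that `φ x₁` and `φ x₂`
are equal or differ by the factor `1 + dβ`; if `(1 + dβ) ^ s = 1` this factor preserves `s`-th
roots of unity, which forces `x₁ = x₂`. Conversely, when `d` is odd and divides `q - 1`, the
coprimality of `q + 1` and `d` puts an `s`-th root of unity `t = φ x` on `T`; solving `L w = d t`
gives `f (x + w) = f x`, and then `w ≠ 0` contradicts injectivity unless `(1 + dβ) ^ s = 1`.
-/

theorem exists_ringHom_eq_pow {F : Type*} [Field F] [Fintype F] {q k : ℕ} (hq : IsPrimePow q)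
    (hF : Fintype.card F = q ^ k) : ∃ σ : F →+* F, ∀ x, σ x = x ^ q := by
  obtain ⟨p, n, hp, -, rfl⟩ := hq
  have : Fact p.Prime := ⟨hp.nat_prime⟩
  have : CharP F p := charP_of_card_eq_prime_pow (f := n * k) (by rw [hF, pow_mul])
  exact ⟨iterateFrobenius F p n, iterateFrobenius_def p n⟩

theorem exists_pow_add_mul_ne_zero {F : Type*} [Field F] [Fintype F] {q : ℕ} (hq : 2 ≤ q)
    (hF : q < Fintype.card F) (e : F) : ∃ y : F, y ^ q + e * y ≠ 0 := by
  have hdeg : (C e * X).degree < (q : WithBot ℕ) :=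
    (degree_C_mul_X_le e).trans_lt (by exact_mod_cast hq)
  have hmonic : ((X : F[X]) ^ q + C e * X).Monic := monic_X_pow_add hdeg
  obtain ⟨y, hy⟩ := exists_eval_ne_zero_of_natDegree_lt_card _ hmonic.ne_zero
    (by rw [natDegree_add_eq_left_of_degree_lt (by rwa [degree_X_pow]), natDegree_X_pow,
      Cardinal.mk_fintype]; exact_mod_cast hF)
  exact ⟨y, by simpa using hy⟩

theorem exists_pow_eq_one_and_mul_pow_eq_one {G : Type*} [CommGroup G] {e k s d : ℕ}
    (hek : e * k = s * d) (hcop : Nat.Coprime e d) (y : G) (hy : y ^ (s * d) = 1) :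
    ∃ z : G, z ^ k = 1 ∧ (z * y) ^ s = 1 := by
  have hbez : (e : ℤ) * e.gcdA d + d * e.gcdB d = 1 := by
    rw [← Nat.gcd_eq_gcd_ab, hcop, Nat.cast_one]
  have hy' : ∀ m : ℤ, y ^ ((s * d : ℕ) * m) = 1 := fun m => by
    rw [zpow_mul, zpow_natCast, hy, one_zpow]
  refine ⟨y ^ (-(e * e.gcdA d)), ?_, ?_⟩
  · rw [← zpow_natCast, ← zpow_mul]
    convert hy' (-e.gcdA d) using 2
    push_cast [← hek]; ring
  · rw [← zpow_natCast, ← zpow_add_one, ← zpow_mul]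
    convert hy' (e.gcdB d) using 2
    push_cast; linear_combination -(s : ℤ) * hbez

theorem Nat.coprime_add_one_of_dvd_sub_one {q d : ℕ} (hq : 1 ≤ q) (hd : Odd d) (hdq : d ∣ q - 1) :
    Nat.Coprime (q + 1) d := by
  obtain ⟨m, hm⟩ := hdq
  rw [show q + 1 = 2 + m * d by rw [mul_comm]; omega, Nat.coprime_add_mul_right_left,
    Nat.coprime_two_left]
  exact hd

theorem natCast_ne_zero_of_dvd_sub_one {R : Type*} [Ring R] [Nontrivial R] {q d : ℕ}
    (hq : (q : R) = 0) (hq1 : 1 ≤ q) (hdq : d ∣ q - 1) : (d : R) ≠ 0 := by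
  intro hd
  have := Nat.cast_dvd_cast (α := R) hdq
  rw [hd, zero_dvd_iff, Nat.cast_sub hq1, hq, Nat.cast_one, zero_sub, neg_eq_zero] at this
  exact one_ne_zero this

open scoped Classical in
noncomputable def scaleOnRootsOfUnity {F : Type*} [Field F] (s : ℕ) (δ t : F) : F :=
  if t ^ s = 1 then δ * t else 0

section RootsOfUnity

variable {F : Type*} [Field F] {s : ℕ} {δ : F}

theorem scaleOnRootsOfUnity_of_pow_eq_one {t : F} (ht : t ^ s = 1) :
    scaleOnRootsOfUnity s δ t = δ * t := if_pos ht

theorem scaleOnRootsOfUnity_of_pow_ne_one {t : F} (ht : t ^ s ≠ 1) :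
    scaleOnRootsOfUnity s δ t = 0 := if_neg ht

theorem sum_range_pow_mul_add_one {d : ℕ} {t : F} (ht : t ≠ 0 → t ^ (s * d) = 1) :
    ∑ k ∈ range d, t ^ (k * s + 1) = scaleOnRootsOfUnity s (d : F) t := by
  have hterm : ∀ k, t ^ (k * s + 1) = (t ^ s) ^ k * t := fun k => by ring
  simp_rw [hterm, ← sum_mul]
  by_cases h : t ^ s = 1
  · simp [scaleOnRootsOfUnity_of_pow_eq_one h, h]
  rw [scaleOnRootsOfUnity_of_pow_ne_one h]
  rcases eq_or_ne t 0 with rfl | ht0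
  · exact mul_zero _
  rw [geom_sum_eq h, ← pow_mul, ht ht0, sub_self, zero_div, zero_mul]

theorem scaleOnRootsOfUnity_eq_of_sub_eq {β t₁ t₂ : F} (hs : s ≠ 0) (hΔ : (1 + δ * β) ^ s = 1)
    (h : t₁ - t₂ = β * (scaleOnRootsOfUnity s δ t₂ - scaleOnRootsOfUnity s δ t₁)) :
    scaleOnRootsOfUnity s δ t₁ = scaleOnRootsOfUnity s δ t₂ := by
  have hΔ0 : 1 + δ * β ≠ 0 := fun h0 => by simp [h0, hs] at hΔ
  by_cases h₁ : t₁ ^ s = 1 <;> by_cases h₂ : t₂ ^ s = 1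
  · rw [scaleOnRootsOfUnity_of_pow_eq_one h₁, scaleOnRootsOfUnity_of_pow_eq_one h₂] at h ⊢
    have : (1 + δ * β) * (t₁ - t₂) = 0 := by linear_combination h
    rw [sub_eq_zero.1 ((mul_eq_zero.1 this).resolve_left hΔ0)]
  · rw [scaleOnRootsOfUnity_of_pow_eq_one h₁, scaleOnRootsOfUnity_of_pow_ne_one h₂] at h
    exact absurd (by rw [show t₂ = (1 + δ * β) * t₁ by linear_combination -h, mul_pow, hΔ, h₁,
      one_mul]) h₂
  · rw [scaleOnRootsOfUnity_of_pow_ne_one h₁, scaleOnRootsOfUnity_of_pow_eq_one h₂] at h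
    exact absurd (by rw [show t₁ = (1 + δ * β) * t₂ by linear_combination h, mul_pow, hΔ, h₂,
      one_mul]) h₁
  · rw [scaleOnRootsOfUnity_of_pow_ne_one h₁, scaleOnRootsOfUnity_of_pow_ne_one h₂]

end RootsOfUnity

section Involution

variable {F : Type*} [Field F] (σ : F →+* F)

theorem eq_zero_of_mul_map_add_mul_eq_zero (hσ : ∀ x, σ (σ x) = x) {u v w : F}
    (huv : u * σ u ≠ v * σ v) (hw : u * σ w + v * w = 0) : w = 0 := by
  have hσw : σ u * w + σ v * σ w = 0 := by simpa [hσ] using congrArg σ hw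
  have : (u * σ u - v * σ v) * (w * σ w) = 0 := by
    linear_combination (σ u * w) * hw - (v * w) * hσw
  rcases mul_eq_zero.1 ((mul_eq_zero.1 this).resolve_left (sub_ne_zero.2 huv)) with h | h
  · exact h
  · rw [← hσ w, h, map_zero]

theorem bijective_mul_map_add_mul [Finite F] (hσ : ∀ x, σ (σ x) = x) {u v : F}
    (huv : u * σ u ≠ v * σ v) : Function.Bijective fun w => u * σ w + v * w :=
  Finite.injective_iff_bijective.1 fun w₁ w₂ h => sub_eq_zero.1 <|
    eq_zero_of_mul_map_add_mul_eq_zero σ hσ huv (by rw [map_sub]; linear_combination h)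

theorem norm_sub_mul_eq_trace_mul (hσ : ∀ x, σ (σ x) = x) {a b u v w : F}
    (hw : b * σ (u * σ w + v * w) = σ a * (u * σ w + v * w)) :
    (u * σ u - v * σ v) * (a * σ w + b * w) =
      (a * σ u - b * σ v + σ (a * σ u - b * σ v)) * (u * σ w + v * w) := by
  have hσw := congrArg σ hw
  simp only [map_add, map_sub, map_mul, hσ] at hw hσw ⊢
  linear_combination u * hw + v * hσw

theorem mul_map_eq_of_norm_eq (hσ : ∀ x, σ (σ x) = x) {a b c : F} (hab : b * σ b = a * σ a)
    (hc : b * σ c = σ a * c) (x : F) :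
    b * σ (a * σ x + b * x + c) = σ a * (a * σ x + b * x + c) := by
  simp only [map_add, map_mul, hσ]
  linear_combination σ x * hab + hc

theorem mul_map_scaleOnRootsOfUnity {a b δ t : F} (s : ℕ) (hδ : σ δ = δ)
    (ht : b * σ t = σ a * t) :
    b * σ (scaleOnRootsOfUnity s δ t) = σ a * scaleOnRootsOfUnity s δ t := by
  unfold scaleOnRootsOfUnity
  split_ifs
  · rw [map_mul, hδ]; linear_combination δ * ht
  · simp

theorem exists_ne_zero_mul_map_eq (hσ : ∀ x, σ (σ x) = x) {a b y : F} (hab : b * σ b = a * σ a)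
    (ha : a ≠ 0) (hy : σ y ≠ y) : ∃ t ≠ 0, b * σ t = σ a * t := by
  by_contra! h
  have hΦ : ∀ x, a * σ x + b * x = 0 := fun x => by
    by_contra hx
    exact h _ hx (by simpa only [add_zero] using
      mul_map_eq_of_norm_eq σ hσ hab (c := 0) (by simp) x)
  have h1 : a + b = 0 := by simpa using hΦ 1
  have hy' : a * (σ y - y) = 0 := by linear_combination hΦ y - y * h1
  exact hy (sub_eq_zero.1 ((mul_eq_zero.1 hy').resolve_left ha))

theorem map_add_mul_div_eq {a b t θ : F} (hθ : θ + σ θ = 1) (hb : b ≠ 0)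
    (hab : b * σ b = a * σ a) (ht : b * σ t = σ a * t) :
    a * σ (θ * t / b) + b * (θ * t / b) = t := by
  have hσb : σ b ≠ 0 := map_ne_zero σ |>.2 hb
  have hσt : σ t = σ a * t / b := by field_simp; linear_combination ht
  rw [map_div₀, map_mul, hσt]
  field_simp
  linear_combination (t * b * σ b) * hθ - (t * σ θ) * hab

theorem exists_add_map_eq_one (hσ : ∀ x, σ (σ x) = x) {y : F} (hy : y + σ y ≠ 0) :
    ∃ θ, θ + σ θ = 1 :=
  ⟨y / (y + σ y), by rw [map_div₀, map_add, hσ, add_comm (σ y) y, ← add_div, div_self hy]⟩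

end Involution

section Permutation

variable {F : Type*} [Field F] (σ : F →+* F)

theorem injective_of_pow_eq_one (hσ : ∀ x, σ (σ x) = x) {a b c u v δ B : F} {s : ℕ}
    (hab : b * σ b = a * σ a) (hc : b * σ c = σ a * c) (huv : u * σ u ≠ v * σ v) (hs : s ≠ 0)
    (hδ : σ δ = δ) (hB : B = a * σ u - b * σ v)
    (hΔ : (1 + δ * (B + σ B) / (u * σ u - v * σ v)) ^ s = 1) :
    Function.Injective fun x =>
      scaleOnRootsOfUnity s δ (a * σ x + b * x + c) + (u * σ x + v * x) := by
  intro x₁ x₂ h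
  have hT := mul_map_eq_of_norm_eq σ hσ hab hc
  have hL : u * σ (x₁ - x₂) + v * (x₁ - x₂) =
      scaleOnRootsOfUnity s δ (a * σ x₂ + b * x₂ + c) -
        scaleOnRootsOfUnity s δ (a * σ x₁ + b * x₁ + c) := by
    rw [map_sub]; linear_combination h
  have hLT : b * σ (u * σ (x₁ - x₂) + v * (x₁ - x₂)) =
      σ a * (u * σ (x₁ - x₂) + v * (x₁ - x₂)) := by
    rw [hL, map_sub]
    linear_combination mul_map_scaleOnRootsOfUnity σ s hδ (hT x₂) -
      mul_map_scaleOnRootsOfUnity σ s hδ (hT x₁)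
  have key := norm_sub_mul_eq_trace_mul σ hσ hLT
  rw [← hB, hL, map_sub] at key
  have hsub : (a * σ x₁ + b * x₁ + c) - (a * σ x₂ + b * x₂ + c) =
      (B + σ B) / (u * σ u - v * σ v) *
        (scaleOnRootsOfUnity s δ (a * σ x₂ + b * x₂ + c) -
        scaleOnRootsOfUnity s δ (a * σ x₁ + b * x₁ + c)) := by
    rw [div_mul_eq_mul_div, eq_div_iff (sub_ne_zero.2 huv)]
    linear_combination key
  rw [mul_div_assoc] at hΔ
  rw [scaleOnRootsOfUnity_eq_of_sub_eq hs hΔ hsub, sub_self] at hL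
  exact sub_eq_zero.1 (eq_zero_of_mul_map_add_mul_eq_zero σ hσ huv hL)

theorem pow_eq_one_of_injective [Finite F] (hσ : ∀ x, σ (σ x) = x) {a b c u v δ B : F} {s : ℕ}
    (hab : b * σ b = a * σ a) (hc : b * σ c = σ a * c) (huv : u * σ u ≠ v * σ v) (hs : s ≠ 0)
    (hδ : σ δ = δ) (hδ0 : δ ≠ 0) (hB : B = a * σ u - b * σ v) {x₁ : F}
    (hx₁ : (a * σ x₁ + b * x₁ + c) ^ s = 1)
    (hf : Function.Injective fun x =>
      scaleOnRootsOfUnity s δ (a * σ x + b * x + c) + (u * σ x + v * x)) :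
    (1 + δ * (B + σ B) / (u * σ u - v * σ v)) ^ s = 1 := by
  by_contra hΔ
  set t₁ := a * σ x₁ + b * x₁ + c
  obtain ⟨w, hw⟩ : ∃ w, u * σ w + v * w = δ * t₁ := (bijective_mul_map_add_mul σ hσ huv).2 _
  have hLT : b * σ (u * σ w + v * w) = σ a * (u * σ w + v * w) := by
    rw [hw, map_mul, hδ]
    linear_combination δ * mul_map_eq_of_norm_eq σ hσ hab hc x₁
  have key := norm_sub_mul_eq_trace_mul σ hσ hLT
  rw [← hB, hw] at key
  have ht₂ : a * σ (x₁ + w) + b * (x₁ + w) + c =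
      (1 + δ * (B + σ B) / (u * σ u - v * σ v)) * t₁ := by
    have hD := sub_ne_zero.2 huv
    rw [map_add]
    field_simp
    linear_combination key
  have hfw : scaleOnRootsOfUnity s δ (a * σ (x₁ + w) + b * (x₁ + w) + c) +
      (u * σ (x₁ + w) + v * (x₁ + w)) = scaleOnRootsOfUnity s δ t₁ + (u * σ x₁ + v * x₁) := by
    rw [ht₂, scaleOnRootsOfUnity_of_pow_ne_one (by rwa [mul_pow, hx₁, mul_one]),
      scaleOnRootsOfUnity_of_pow_eq_one hx₁, map_add]
    linear_combination hw
  have hw0 : w = 0 := by simpa using hf hfw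
  rw [hw0, map_zero, mul_zero, mul_zero, add_zero, eq_comm, mul_eq_zero] at hw
  rw [hw.resolve_left hδ0, zero_pow hs] at hx₁
  exact zero_ne_one hx₁

end Permutation

section FiniteField

variable {F : Type*} [Field F] [Fintype F] {q : ℕ}

theorem pow_pow_eq_self_of_card_eq_sq (hF : Fintype.card F = q ^ 2) (x : F) :
    (x ^ q) ^ q = x := by
  rw [← pow_mul, ← sq, ← hF, FiniteField.pow_card]

theorem exists_pow_eq_one_of_coprime (σ : F →+* F) (hF : Fintype.card F = q ^ 2) (hq : 2 ≤ q)
    (hσ : ∀ x, σ x = x ^ q) {a b c : F} {s d : ℕ} (hab : b * σ b = a * σ a)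
    (hc : b * σ c = σ a * c) (ha : a ≠ 0) (hb : b ≠ 0) (hsd : s * d = q ^ 2 - 1)
    (hcop : Nat.Coprime (q + 1) d) : ∃ x, (a * σ x + b * x + c) ^ s = 1 := by
  have hσσ : ∀ x, σ (σ x) = x := fun x => by rw [hσ, hσ, pow_pow_eq_self_of_card_eq_sq hF]
  have hqF : q < Fintype.card F := hF ▸ by nlinarith
  obtain ⟨y₀, hy₀⟩ := exists_pow_add_mul_ne_zero hq hqF (-1)
  obtain ⟨y₁, hy₁⟩ := exists_pow_add_mul_ne_zero hq hqF 1
  obtain ⟨θ, hθ⟩ := exists_add_map_eq_one σ hσσ (y := y₁) (by simpa [hσ, add_comm] using hy₁)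
  obtain ⟨t, ht0, ht⟩ := exists_ne_zero_mul_map_eq σ hσσ hab ha (y := y₀)
    (fun h => hy₀ (by rw [← hσ, h]; ring))
  obtain ⟨z, hz, hzt⟩ := exists_pow_eq_one_and_mul_pow_eq_one (k := q - 1)
    (by rw [hsd, ← Nat.sq_sub_sq, one_pow]) hcop (Units.mk0 t ht0)
    (Units.ext (by rw [Units.val_pow_eq_pow_val, Units.val_mk0, hsd, ← hF,
      FiniteField.pow_card_sub_one_eq_one t ht0, Units.val_one]))
  have hσz : σ z = z := by
    rw [hσ, ← pow_sub_one_mul (by omega), ← Units.val_pow_eq_pow_val, hz, Units.val_one, one_mul]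
  have hzt' : b * σ (z * t - c) = σ a * (z * t - c) := by
    rw [map_sub, map_mul, hσz]; linear_combination (z : F) * ht - hc
  refine ⟨θ * (z * t - c) / b, ?_⟩
  rw [map_add_mul_div_eq σ hθ hb hab hzt', sub_add_cancel]
  simpa using congrArg Units.val hzt

end FiniteField

theorem stmt_14_general {F : Type*} [Field F] [Fintype F]
    (q : ℕ) (hq : IsPrimePow q) (hF : Fintype.card F = q ^ 2)
    (d : ℕ) (hdvd : d ∣ q ^ 2 - 1)
    (a b c u v : F) (hab : a * b ≠ 0)
    (hab1 : a ^ (q + 1) = b ^ (q + 1)) (hac : a * c ^ q = b ^ q * c)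
    (huv : u ^ (q + 1) ≠ v ^ (q + 1))
    (B : F) (hB : B = a * u ^ q - b * v ^ q)
    (f : F → F)
    (hf : f = fun x => (∑ k ∈ Finset.range d,
      (a * x ^ q + b * x + c) ^ (k * ((q ^ 2 - 1) / d) + 1)) + u * x ^ q + v * x) :
    ((1 + (d : F) * (B + B ^ q) / (u ^ (q + 1) - v ^ (q + 1))) ^ ((q ^ 2 - 1) / d) = 1 →
      Function.Bijective f) ∧
    (Odd d → d ∣ q - 1 →
      (Function.Bijective f ↔
        (1 + (d : F) * (B + B ^ q) / (u ^ (q + 1) - v ^ (q + 1))) ^ ((q ^ 2 - 1) / d) = 1)) := by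
  obtain ⟨σ, hσ⟩ := exists_ringHom_eq_pow hq hF
  have hσσ : ∀ x, σ (σ x) = x := fun x => by rw [hσ, hσ, pow_pow_eq_self_of_card_eq_sq hF]
  have hq2 := hq.two_le
  set s := (q ^ 2 - 1) / d
  have hsd : s * d = q ^ 2 - 1 := Nat.div_mul_cancel hdvd
  have hs : s ≠ 0 := fun h => by
    rw [h, zero_mul] at hsd; nlinarith [Nat.sub_eq_zero_iff_le.1 hsd.symm]
  have hf' : f = fun x =>
      scaleOnRootsOfUnity s (d : F) (a * σ x + b * x + c) + (u * σ x + v * x) := by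
    subst hf
    funext x
    rw [sum_range_pow_mul_add_one fun ht => by
      rw [hsd, ← hF, FiniteField.pow_card_sub_one_eq_one _ ht], hσ]
    ring
  have hab' : b * σ b = a * σ a := by rw [hσ, hσ, ← pow_succ', ← pow_succ', hab1]
  have hc' : b * σ c = σ a * c := by
    rw [← hσ, ← hσ] at hac
    simpa [hσσ] using (congrArg σ hac).symm
  have huv' : u * σ u ≠ v * σ v := by rwa [hσ, hσ, ← pow_succ', ← pow_succ']
  have hB' : B = a * σ u - b * σ v := by rw [hσ, hσ]; exact hB
  have hD : u ^ (q + 1) - v ^ (q + 1) = u * σ u - v * σ v := by rw [hσ, hσ, pow_succ', pow_succ']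
  rw [hf', hD, ← hσ B]
  have hinj := injective_of_pow_eq_one σ hσσ hab' hc' huv' hs (map_natCast σ d) hB'
  refine ⟨fun h => Finite.injective_iff_bijective.1 (hinj h), fun hodd hdq => ?_⟩
  have hcop := Nat.coprime_add_one_of_dvd_sub_one (by omega) hodd hdq
  obtain ⟨x₁, hx₁⟩ := exists_pow_eq_one_of_coprime σ hF hq2 hσ hab' hc' (left_ne_zero_of_mul hab)
    (right_ne_zero_of_mul hab) hsd hcop
  have hq0 : (q : F) = 0 := by
    simpa using (hF ▸ FiniteField.cast_card_eq_zero F : ((q ^ 2 : ℕ) : F) = 0)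
  have hd0 := natCast_ne_zero_of_dvd_sub_one hq0 (by omega) hdq
  exact ⟨fun hbij => pow_eq_one_of_injective σ hσσ hab' hc' huv' hs (map_natCast σ d) hd0 hB'
    hx₁ hbij.injective, fun h => Finite.injective_iff_bijective.1 (hinj h)⟩

theorem stmt_14 {F : Type*} [Field F] [Fintype F]
    (q : ℕ) (hq : IsPrimePow q) (hF : Fintype.card F = q ^ 2)
    (d : ℕ) (hd3 : 3 ≤ d) (hdvd : d ∣ q ^ 2 - 1)
    (a b c u v : F) (hab : a * b ≠ 0)
    (hab1 : a ^ (q + 1) = b ^ (q + 1)) (hac : a * c ^ q = b ^ q * c)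
    (huv : u ^ (q + 1) ≠ v ^ (q + 1))
    (B : F) (hB : B = a * u ^ q - b * v ^ q)
    (f : F → F)
    (hf : f = fun x => (∑ k ∈ Finset.range d,
      (a * x ^ q + b * x + c) ^ (k * ((q ^ 2 - 1) / d) + 1)) + u * x ^ q + v * x) :
    ((1 + (d : F) * (B + B ^ q) / (u ^ (q + 1) - v ^ (q + 1))) ^ ((q ^ 2 - 1) / d) = 1 →
      Function.Bijective f) ∧
    (Odd d → d ∣ q - 1 →
      (Function.Bijective f ↔
        (1 + (d : F) * (B + B ^ q) / (u ^ (q + 1) - v ^ (q + 1))) ^ ((q ^ 2 - 1) / d) = 1)) :=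
  stmt_14_general q hq hF d hdvd a b c u v hab hab1 hac huv B hB f hf
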